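/- arXiv:2411.05490 — 12 statements merged into one kernel-verified Lean document; each statement's English description precedes it below -/
import Mathlib

section
/- In a δ-Poisson algebra with δ ≠ 1, the bracket of two products vanishes: {x·y, z·t} = 0 for all x, y, z, t. -/
theorem stmt1 {K : Type*} [Field K] [CharZero K] {P : Type*} [AddCommGroup P] [Module K P]
    (mul br : P →ₗ[K] P →ₗ[K] P) (δ : K)
    (hcomm : ∀ x y : P, mul x y = mul y x)
    (hassoc : ∀ x y z : P, mul (mul x y) z = mul x (mul y z))
    (hanti : ∀ x y : P, br x y = - br y x)
    (hjac : ∀ x y z : P, br (br x y) z + br (br y z) x + br (br z x) y = 0)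
    (hleib : ∀ x y z : P, br (mul x y) z = δ • (mul x (br y z) + mul (br x z) y))
    (hδ : δ ≠ 1) :
    ∀ x y z t : P, br (mul x y) (mul z t) = 0 := by
  intro x y z t
  rcases eq_or_ne δ 0 with h0 | h0
  · rw [hleib, h0, zero_smul]
  · have hc : δ - δ * δ ≠ 0 := by
      have h1 : (1 : K) - δ ≠ 0 := sub_ne_zero.mpr hδ.symm
      have := mul_ne_zero h0 h1
      intro h; apply this
      linear_combination h
    -- key identity (⋆)
    have star : ∀ a b c d : P, mul a (mul b (br c d)) = mul (br a d) (mul b c) := by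
      intro a b c d
      have E : δ • (mul (mul a b) (br c d) + mul (br (mul a b) d) c)
          = δ • (mul a (br (mul b c) d) + mul (br a d) (mul b c)) := by
        rw [← hleib, ← hleib, hassoc]
      simp only [hleib, map_add, map_smul, LinearMap.add_apply, LinearMap.smul_apply,
        smul_add, smul_smul, hassoc] at E
      have h2 : (δ - δ * δ) • (mul a (mul b (br c d)) - mul (br a d) (mul b c)) = 0 := by
        linear_combination (norm := module) E
      have h3 := congrArg (fun w => (δ - δ * δ)⁻¹ • w) h2
      simp only [smul_smul, inv_mul_cancel₀ hc, one_smul, smul_zero] at h3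
      exact sub_eq_zero.mp h3
    have key : ∀ a b c d : P, mul (br a d) (mul b c) = - mul (br a c) (mul b d) := by
      intro a b c d
      rw [← star a b c d, ← star a b d c, hanti c d]
      simp
    have hy : br y (mul z t) = δ • (mul z (br y t) + mul (br y z) t) := by
      rw [hanti y (mul z t), hleib, hanti t y, hanti z y]
      simp only [map_neg, LinearMap.neg_apply, smul_add, smul_neg, neg_add_rev, neg_neg]
      abel
    have hx : br x (mul z t) = δ • (mul z (br x t) + mul (br x z) t) := by
      rw [hanti x (mul z t), hleib, hanti t x, hanti z x]
      simp only [map_neg, LinearMap.neg_apply, smul_add, smul_neg, neg_add_rev, neg_neg]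
      abel
    have hsum : mul x (mul z (br y t)) + mul x (mul (br y z) t)
        + mul (mul z (br x t)) y + mul (mul (br x z) t) y = 0 := by
      rw [hcomm (br y z) t, hcomm (mul z (br x t)) y, hcomm (mul (br x z) t) y,
        hcomm (br x z) t, star x z y t, star x t y z, star y z x t, star y t x z,
        key x z y t, key x t y z, key y z x t, key y t x z, hanti y x]
      simp only [map_neg, LinearMap.neg_apply, neg_neg, hcomm z t]
      abel
    rw [hleib, hy, hx]
    simp only [map_add, map_smul, LinearMap.add_apply, LinearMap.smul_apply, smul_add, smul_smul]
    linear_combination (norm := module) (δ * δ) • hsum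
end

section
/- In a δ-Poisson algebra with δ ≠ 1, the bracket of any element with a triple product vanishes: {x, y·z·t} = 0 for all x, y, z, t. -/
theorem stmt2 {K : Type*} [Field K] [CharZero K] {P : Type*} [AddCommGroup P] [Module K P]
    (mul br : P →ₗ[K] P →ₗ[K] P) (δ : K)
    (hcomm : ∀ x y : P, mul x y = mul y x)
    (hassoc : ∀ x y z : P, mul (mul x y) z = mul x (mul y z))
    (hanti : ∀ x y : P, br x y = - br y x)
    (hjac : ∀ x y z : P, br (br x y) z + br (br y z) x + br (br z x) y = 0)
    (hleib : ∀ x y z : P, br (mul x y) z = δ • (mul x (br y z) + mul (br x z) y))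
    (hδ : δ ≠ 1) :
    ∀ x y z t : P, br x (mul y (mul z t)) = 0 := by
  intro x y z t
  by_cases h0 : δ = 0
  · have h1 : br (mul y (mul z t)) x = 0 := by
      rw [hleib, h0, zero_smul]
    rw [hanti, h1, neg_zero]
  · have hδ1 : δ - δ * δ ≠ 0 := by
      have h : δ - δ * δ = δ * (1 - δ) := by ring
      rw [h]
      exact mul_ne_zero h0 (sub_ne_zero.mpr (Ne.symm hδ))
    -- R1 : (ab)·{c,d} = {a,d}·(bc)
    have R1 : ∀ a b c d : P, mul (mul a b) (br c d) = mul (br a d) (mul b c) := by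
      intro a b c d
      have e1 : br (mul (mul a b) c) d
          = δ • mul (mul a b) (br c d)
            + (δ * δ) • mul (mul a (br b d)) c
            + (δ * δ) • mul (mul (br a d) b) c := by
        rw [hleib (mul a b) c d, hleib a b d]
        simp only [map_add, map_smul, LinearMap.add_apply, LinearMap.smul_apply,
          smul_add, smul_smul]
        abel
      have e2 : br (mul (mul a b) c) d
          = (δ * δ) • mul (mul a b) (br c d)
            + (δ * δ) • mul (mul a (br b d)) c
            + δ • mul (br a d) (mul b c) := by
        rw [hassoc a b c, hleib a (mul b c) d, hleib b c d]
        simp only [map_add, map_smul, LinearMap.add_apply, LinearMap.smul_apply,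
          smul_add, smul_smul, ← hassoc]
      have e3 : mul (mul (br a d) b) c = mul (br a d) (mul b c) := hassoc _ _ _
      rw [e3] at e1
      have key := e1.symm.trans e2
      apply smul_right_injective P hδ1
      linear_combination (norm := module) key
    -- symmetry of G in (a,b)
    have sym : ∀ a b c d : P, mul (br a d) (mul b c) = mul (br b d) (mul a c) := by
      intro a b c d
      rw [← R1 a b c d, hcomm a b, R1]
    -- antisymmetry of G in (a,d)
    have anti : ∀ a b c d : P, mul (br a d) (mul b c) = - mul (br d a) (mul b c) := by
      intro a b c d
      rw [hanti a d, map_neg, LinearMap.neg_apply]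
    -- G = 0
    have hG : ∀ a b c d : P, mul (br a d) (mul b c) = 0 := by
      intro a b c d
      have chain : mul (br a d) (mul b c) = - mul (br a d) (mul b c) := by
        calc mul (br a d) (mul b c)
            = - mul (br d a) (mul b c) := anti a b c d
          _ = - mul (br b a) (mul d c) := by rw [sym d b c a]
          _ = - - mul (br a b) (mul d c) := by rw [anti b d c a]
          _ = - - mul (br d b) (mul a c) := by rw [sym a d c b]
          _ = - - - mul (br b d) (mul a c) := by rw [anti d a c b]
          _ = - - - mul (br a d) (mul b c) := by rw [sym b a c d]
          _ = - mul (br a d) (mul b c) := by rw [neg_neg]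
      have h2 : (2 : K) • mul (br a d) (mul b c) = 0 := by
        rw [two_smul]
        nth_rewrite 1 [chain]
        abel
      have h2' : (2 : K) ≠ 0 := two_ne_zero
      rcases smul_eq_zero.mp h2 with h | h
      · exact absurd h h2'
      · exact h
    -- final computation
    rw [hanti, hleib y (mul z t) x, hleib z t x]
    have t1 : mul (br y x) (mul z t) = 0 := hG y z t x
    have t2 : mul y (mul z (br t x)) = 0 := by
      rw [← hassoc, R1, hG]
    have t3 : mul y (mul (br z x) t) = 0 := by
      rw [hcomm (br z x) t, ← hassoc, R1, hG]
    simp only [map_add, map_smul, smul_add, t1, t2, t3, smul_zero, add_zero, neg_zero]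
end

section
/- In a δ-Poisson algebra with δ ≠ 1, one has {x·y, {z,t}} = 0 for all x, y, z, t. -/
theorem stmt3 {K : Type*} [Field K] [CharZero K] {P : Type*} [AddCommGroup P] [Module K P]
    (mul br : P →ₗ[K] P →ₗ[K] P) (δ : K)
    (hcomm : ∀ x y : P, mul x y = mul y x)
    (hassoc : ∀ x y z : P, mul (mul x y) z = mul x (mul y z))
    (hanti : ∀ x y : P, br x y = - br y x)
    (hjac : ∀ x y z : P, br (br x y) z + br (br y z) x + br (br z x) y = 0)
    (hleib : ∀ x y z : P, br (mul x y) z = δ • (mul x (br y z) + mul (br x z) y))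
    (hδ : δ ≠ 1) :
    ∀ x y z t : P, br (mul x y) (br z t) = 0 := by
  intro x y z t
  by_cases h0 : δ = 0
  · rw [hleib, h0, zero_smul]
  have hJy : ∀ a : P, br (br a z) t - br (br a t) z = br a (br z t) := by
    intro a
    have hJ := hjac a z t
    have e1 : br (br z t) a = - br a (br z t) := by rw [hanti (br z t) a]
    have e2 : br (br t a) z = - br (br a t) z := by
      rw [hanti t a, map_neg, LinearMap.neg_apply]
    rw [e1, e2] at hJ
    rw [← sub_eq_zero,
      show br (br a z) t - br (br a t) z - br a (br z t) =
        br (br a z) t + -br a (br z t) + -br (br a t) z by abel, hJ]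
  have key : br (mul x y) (br z t) =
      (δ * δ) • (mul x (br y (br z t)) + mul (br x (br z t)) y) := by
    rw [← hJy (mul x y), hleib x y z, hleib x y t]
    simp only [map_smul, LinearMap.smul_apply, map_add, LinearMap.add_apply, hleib]
    rw [← hJy x, ← hJy y]
    simp only [map_sub, LinearMap.sub_apply]
    module
  have hl := hleib x y (br z t)
  have heq : (δ * δ - δ) • (mul x (br y (br z t)) + mul (br x (br z t)) y) = 0 := by
    rw [sub_smul, ← key, ← hl, sub_self]
  have hne : δ * δ - δ ≠ 0 := by
    have h1 : δ * (δ - 1) ≠ 0 := mul_ne_zero h0 (sub_ne_zero.mpr hδ)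
    simpa [mul_sub] using h1
  rcases smul_eq_zero.mp heq with h | h
  · exact absurd h hne
  · rw [hl, h, smul_zero]
end

section
/- If δ ≠ 1 and a δ-Poisson algebra P is perfect for the associative product, i.e. every element is a sum of products x·y, then the Lie bracket is identically zero. Consequently there are no nontrivial simple δ-Poisson algebras for δ ≠ 1. -/
theorem stmt6 {K : Type*} [Field K] [CharZero K] {P : Type*} [AddCommGroup P] [Module K P]
    (mul br : P →ₗ[K] P →ₗ[K] P) (δ : K)
    (hcomm : ∀ x y : P, mul x y = mul y x)
    (hassoc : ∀ x y z : P, mul (mul x y) z = mul x (mul y z))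
    (hanti : ∀ x y : P, br x y = - br y x)
    (hjac : ∀ x y z : P, br (br x y) z + br (br y z) x + br (br z x) y = 0)
    (hleib : ∀ x y z : P, br (mul x y) z = δ • (mul x (br y z) + mul (br x z) y))
    (hδ : δ ≠ 1)
    (hperf : Submodule.span K {p : P | ∃ x y : P, p = mul x y} = ⊤) :
    ∀ y z : P, br y z = 0 := by
  intro y z
  have hmem : ∀ x : P, x ∈ Submodule.span K {p : P | ∃ u v : P, p = mul u v} := by
    intro x; rw [hperf]; trivial
  -- products are killed by the bracket in both arguments (first step of the proof)
  have hprod0 : ∀ a b w : P, br (mul a b) w = 0 := by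
    rcases eq_or_ne δ 0 with h0 | h0
    · intro a b w; rw [hleib, h0, zero_smul]
    · have hne : δ - δ * δ ≠ 0 := by
        have h1 : δ * (1 - δ) ≠ 0 := mul_ne_zero h0 (sub_ne_zero.mpr (Ne.symm hδ))
        intro h; exact h1 (by linear_combination h)
      have hkey : ∀ a b c d : P,
          mul (mul a b) (br c d) = mul (mul b c) (br a d) := by
        intro a b c d
        have h1 : br (mul (mul a b) c) d = br (mul a (mul b c)) d := by rw [hassoc]
        rw [hleib (mul a b) c d, hleib a (mul b c) d, hleib a b d, hleib b c d] at h1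
        simp only [map_add, map_smul, LinearMap.add_apply, LinearMap.smul_apply,
          smul_add, smul_smul] at h1
        rw [← hassoc a b (br c d), ← hassoc a (br b d) c, hassoc (br a d) b c,
          hcomm (br a d) (mul b c)] at h1
        have h3 := sub_eq_zero_of_eq h1
        have h2 : (δ - δ * δ) • (mul (mul a b) (br c d) - mul (mul b c) (br a d)) = 0 := by
          rw [← h3]; module
        rcases smul_eq_zero.mp h2 with h | h
        · exact absurd h hne
        · exact sub_eq_zero.mp h
      have s13 : ∀ a b c d : P,
          mul (mul a b) (br c d) = mul (mul c b) (br a d) := by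
        intro a b c d; rw [hkey a b c d, hcomm b c]
      have hTanti : ∀ a b c d : P,
          mul (mul a b) (br c d) = - mul (mul a b) (br d c) := by
        intro a b c d; rw [hanti c d, map_neg]
      have hT0 : ∀ a b c d : P, mul (mul a b) (br c d) = 0 := by
        intro a b c d
        have e1 : mul (mul a b) (br c d) = - mul (mul a b) (br c d) := by
          conv_lhs => rw [s13 a b c d, hTanti c b a d, s13 c b d a, hTanti d b c a,
            s13 d b a c, hTanti a b d c]
          rw [neg_neg]
        have h2 : (2 : K) • mul (mul a b) (br c d) = 0 := by
          rw [two_smul]; nth_rewrite 2 [e1]; exact add_neg_cancel _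
        rcases smul_eq_zero.mp h2 with h | h
        · exact absurd h two_ne_zero
        · exact h
      -- any element multiplied by a bracket is zero, by perfectness
      have hmul0 : ∀ (x c d : P), mul x (br c d) = 0 := by
        intro x c d
        refine Submodule.span_induction (p := fun x _ => mul x (br c d) = 0)
          ?_ ?_ ?_ ?_ (hmem x)
        · rintro _ ⟨u, v, rfl⟩; exact hT0 u v c d
        · simp
        · intro u v _ _ hu hv; simp [map_add, hu, hv]
        · intro a u _ hu; simp [map_smul, hu]
      intro a b w
      rw [hleib, hmul0, hcomm, hmul0, add_zero, smul_zero]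
  -- conclude by perfectness
  refine Submodule.span_induction (p := fun y _ => br y z = 0) ?_ ?_ ?_ ?_ (hmem y)
  · rintro _ ⟨u, v, rfl⟩; exact hprod0 u v z
  · simp
  · intro u v _ _ hu hv; simp [map_add, hu, hv]
  · intro a u _ hu; simp [map_smul, hu]
end

section
/- The tensor product of two δ-Poisson algebras, equipped with products (x₁⊗y₁)·(x₂⊗y₂) = x₁x₂ ⊗ y₁y₂ and {x₁⊗y₁, x₂⊗y₂} = {x₁,x₂}⊗y₁y₂ + x₁x₂⊗{y₁,y₂}, is again a δ-Poisson algebra. -/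
open TensorProduct in
theorem stmt7 {K : Type*} [Field K] {P₁ P₂ : Type*} [AddCommGroup P₁] [Module K P₁]
    [AddCommGroup P₂] [Module K P₂]
    (mul₁ br₁ : P₁ →ₗ[K] P₁ →ₗ[K] P₁) (mul₂ br₂ : P₂ →ₗ[K] P₂ →ₗ[K] P₂) (δ : K)
    (hcomm₁ : ∀ x y : P₁, mul₁ x y = mul₁ y x)
    (hassoc₁ : ∀ x y z : P₁, mul₁ (mul₁ x y) z = mul₁ x (mul₁ y z))
    (hanti₁ : ∀ x y : P₁, br₁ x y = - br₁ y x)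
    (hjac₁ : ∀ x y z : P₁, br₁ (br₁ x y) z + br₁ (br₁ y z) x + br₁ (br₁ z x) y = 0)
    (hcomm₂ : ∀ x y : P₂, mul₂ x y = mul₂ y x)
    (hassoc₂ : ∀ x y z : P₂, mul₂ (mul₂ x y) z = mul₂ x (mul₂ y z))
    (hanti₂ : ∀ x y : P₂, br₂ x y = - br₂ y x)
    (hjac₂ : ∀ x y z : P₂, br₂ (br₂ x y) z + br₂ (br₂ y z) x + br₂ (br₂ z x) y = 0)
    (M B : (P₁ ⊗[K] P₂) →ₗ[K] (P₁ ⊗[K] P₂) →ₗ[K] (P₁ ⊗[K] P₂))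
    (hM : ∀ (x₁ x₂ : P₁) (y₁ y₂ : P₂),
      M (x₁ ⊗ₜ[K] y₁) (x₂ ⊗ₜ[K] y₂) = (mul₁ x₁ x₂) ⊗ₜ[K] (mul₂ y₁ y₂))
    (hB : ∀ (x₁ x₂ : P₁) (y₁ y₂ : P₂),
      B (x₁ ⊗ₜ[K] y₁) (x₂ ⊗ₜ[K] y₂)
        = (br₁ x₁ x₂) ⊗ₜ[K] (mul₂ y₁ y₂) + (mul₁ x₁ x₂) ⊗ₜ[K] (br₂ y₁ y₂))
    (hleib₁ : ∀ x y z : P₁, br₁ (mul₁ x y) z = δ • (mul₁ x (br₁ y z) + mul₁ (br₁ x z) y))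
    (hleib₂ : ∀ x y z : P₂, br₂ (mul₂ x y) z = δ • (mul₂ x (br₂ y z) + mul₂ (br₂ x z) y)) :
    (∀ u v : P₁ ⊗[K] P₂, M u v = M v u) ∧
    (∀ u v w : P₁ ⊗[K] P₂, M (M u v) w = M u (M v w)) ∧
    (∀ u v : P₁ ⊗[K] P₂, B u v = - B v u) ∧
    (∀ u v w : P₁ ⊗[K] P₂, B (B u v) w + B (B v w) u + B (B w u) v = 0) ∧
    (∀ u v w : P₁ ⊗[K] P₂, B (M u v) w = δ • (M u (B v w) + M (B u w) v)) := by
  -- key expansion of B (B (a⊗p) (b⊗q)) (c⊗r) into canonical atoms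
  have key : ∀ (a b c : P₁) (p q r : P₂),
      B (B (a ⊗ₜ[K] p) (b ⊗ₜ[K] q)) (c ⊗ₜ[K] r)
        = br₁ (br₁ a b) c ⊗ₜ[K] mul₂ (mul₂ p q) r
          + δ • (mul₁ (br₁ a b) c ⊗ₜ[K] mul₂ (br₂ q r) p)
          + δ • (mul₁ (br₁ a b) c ⊗ₜ[K] mul₂ (br₂ p r) q)
          + δ • (mul₁ (br₁ b c) a ⊗ₜ[K] mul₂ (br₂ p q) r)
          + δ • (mul₁ (br₁ a c) b ⊗ₜ[K] mul₂ (br₂ p q) r)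
          + mul₁ (mul₁ a b) c ⊗ₜ[K] br₂ (br₂ p q) r := by
    intro a b c p q r
    rw [hB a b p q, map_add, LinearMap.add_apply, hB, hB, hleib₁, hleib₂,
      hcomm₂ p (br₂ q r), hcomm₁ a (br₁ b c)]
    simp only [smul_add, tmul_smul, ← smul_tmul', tmul_add, add_tmul]
    abel
  refine ⟨?_, ?_, ?_, ?_, ?_⟩
  · -- commutativity of M
    intro u v
    induction u using TensorProduct.induction_on with
    | zero => simp
    | tmul a p =>
      induction v using TensorProduct.induction_on with
      | zero => simp
      | tmul b q => rw [hM, hM, hcomm₁, hcomm₂]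
      | add x y hx hy => simp only [map_add, LinearMap.add_apply, hx, hy]
    | add x y hx hy => simp only [map_add, LinearMap.add_apply, hx, hy]
  · -- associativity of M
    intro u v w
    induction u using TensorProduct.induction_on with
    | zero => simp
    | tmul a p =>
      induction v using TensorProduct.induction_on with
      | zero => simp
      | tmul b q =>
        induction w using TensorProduct.induction_on with
        | zero => simp
        | tmul c r => rw [hM, hM, hM, hM, hassoc₁, hassoc₂]
        | add x y hx hy => simp only [map_add, LinearMap.add_apply, hx, hy]
      | add x y hx hy => simp only [map_add, LinearMap.add_apply, hx, hy]
    | add x y hx hy => simp only [map_add, LinearMap.add_apply, hx, hy]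
  · -- antisymmetry of B
    intro u v
    induction u using TensorProduct.induction_on with
    | zero => simp
    | tmul a p =>
      induction v using TensorProduct.induction_on with
      | zero => simp
      | tmul b q =>
        rw [hB, hB, hanti₁ b a, hanti₂ q p, hcomm₁ b a, hcomm₂ q p, neg_tmul,
          tmul_neg, neg_add, neg_neg, neg_neg]
      | add x y hx hy => simp only [map_add, LinearMap.add_apply, hx, hy, neg_add]
    | add x y hx hy => simp only [map_add, LinearMap.add_apply, hx, hy, neg_add]
  · -- Jacobi identity for B
    intro u v w
    induction u using TensorProduct.induction_on with
    | zero => simp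
    | tmul a p =>
      induction v using TensorProduct.induction_on with
      | zero => simp
      | tmul b q =>
        induction w using TensorProduct.induction_on with
        | zero => simp
        | tmul c r =>
          rw [key a b c p q r, key b c a q r p, key c a b r p q]
          rw [show mul₂ (mul₂ q r) p = mul₂ (mul₂ p q) r from by
                rw [hcomm₂ (mul₂ q r) p, ← hassoc₂],
              show mul₂ (mul₂ r p) q = mul₂ (mul₂ p q) r from by
                rw [hcomm₂ r p, hassoc₂, hcomm₂ r q, ← hassoc₂],
              show mul₁ (mul₁ b c) a = mul₁ (mul₁ a b) c from by
                rw [hcomm₁ (mul₁ b c) a, ← hassoc₁],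
              show mul₁ (mul₁ c a) b = mul₁ (mul₁ a b) c from by
                rw [hcomm₁ c a, hassoc₁, hcomm₁ c b, ← hassoc₁],
              hanti₁ c a, hanti₁ b a, hanti₁ c b, hanti₂ r p, hanti₂ r q, hanti₂ q p]
          simp only [map_neg, LinearMap.neg_apply, neg_tmul, tmul_neg, smul_neg]
          have j1 : br₁ (br₁ a b) c ⊗ₜ[K] mul₂ (mul₂ p q) r
              + br₁ (br₁ b c) a ⊗ₜ[K] mul₂ (mul₂ p q) r
              + br₁ (-br₁ a c) b ⊗ₜ[K] mul₂ (mul₂ p q) r = 0 := by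
            rw [← hanti₁ c a, ← add_tmul, ← add_tmul, hjac₁, zero_tmul]
          have j2 : mul₁ (mul₁ a b) c ⊗ₜ[K] br₂ (br₂ p q) r
              + mul₁ (mul₁ a b) c ⊗ₜ[K] br₂ (br₂ q r) p
              + mul₁ (mul₁ a b) c ⊗ₜ[K] br₂ (-br₂ p r) q = 0 := by
            rw [← hanti₂ r p, ← tmul_add, ← tmul_add, hjac₂, tmul_zero]
          simp only [map_neg, LinearMap.neg_apply, neg_tmul, tmul_neg] at j1 j2
          linear_combination (norm := abel) j1 + j2
        | add x y hx hy =>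
          simp only [map_add, LinearMap.add_apply]
          linear_combination (norm := abel) hx + hy
      | add x y hx hy =>
        simp only [map_add, LinearMap.add_apply]
        linear_combination (norm := abel) hx + hy
    | add x y hx hy =>
      simp only [map_add, LinearMap.add_apply]
      linear_combination (norm := abel) hx + hy
  · -- Leibniz rule for B over M
    intro u v w
    induction u using TensorProduct.induction_on with
    | zero => simp
    | tmul a p =>
      induction v using TensorProduct.induction_on with
      | zero => simp
      | tmul b q =>
        induction w using TensorProduct.induction_on with
        | zero => simp
        | tmul c r =>
          rw [hM a b p q, hB (mul₁ a b) c (mul₂ p q) r, hleib₁, hleib₂,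
            hB a c p r, hB b c q r]
          simp only [map_add, LinearMap.add_apply, hM]
          rw [show mul₂ (mul₂ p r) q = mul₂ (mul₂ p q) r from by
                rw [hassoc₂, hassoc₂, hcomm₂ r q],
              show mul₁ (mul₁ a c) b = mul₁ (mul₁ a b) c from by
                rw [hassoc₁, hassoc₁, hcomm₁ c b],
              show mul₂ p (mul₂ q r) = mul₂ (mul₂ p q) r from (hassoc₂ p q r).symm,
              show mul₁ a (mul₁ b c) = mul₁ (mul₁ a b) c from (hassoc₁ a b c).symm,
              hcomm₁ a (br₁ b c), hcomm₂ p (br₂ q r)]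
          simp only [smul_add, tmul_smul, ← smul_tmul', tmul_add, add_tmul]
          abel
        | add x y hx hy =>
          simp only [map_add, LinearMap.add_apply, smul_add] at hx hy ⊢
          linear_combination (norm := abel) hx + hy
      | add x y hx hy =>
        simp only [map_add, LinearMap.add_apply, smul_add] at hx hy ⊢
        linear_combination (norm := abel) hx + hy
    | add x y hx hy =>
      simp only [map_add, LinearMap.add_apply, smul_add] at hx hy ⊢
      linear_combination (norm := abel) hx + hy
end

section
/- The tensor product of two transposed δ-Poisson algebras, with products (x₁⊗y₁)·(x₂⊗y₂) = x₁x₂ ⊗ y₁y₂ and {x₁⊗y₁, x₂⊗y₂} = {x₁,x₂}⊗y₁y₂ + x₁x₂⊗{y₁,y₂}, is again a transposed δ-Poisson algebra. -/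
open TensorProduct in
theorem stmt8 {K : Type*} [Field K] {P₁ P₂ : Type*} [AddCommGroup P₁] [Module K P₁]
    [AddCommGroup P₂] [Module K P₂]
    (mul₁ br₁ : P₁ →ₗ[K] P₁ →ₗ[K] P₁) (mul₂ br₂ : P₂ →ₗ[K] P₂ →ₗ[K] P₂) (δ : K)
    (hcomm₁ : ∀ x y : P₁, mul₁ x y = mul₁ y x)
    (hassoc₁ : ∀ x y z : P₁, mul₁ (mul₁ x y) z = mul₁ x (mul₁ y z))
    (hanti₁ : ∀ x y : P₁, br₁ x y = - br₁ y x)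
    (hjac₁ : ∀ x y z : P₁, br₁ (br₁ x y) z + br₁ (br₁ y z) x + br₁ (br₁ z x) y = 0)
    (hcomm₂ : ∀ x y : P₂, mul₂ x y = mul₂ y x)
    (hassoc₂ : ∀ x y z : P₂, mul₂ (mul₂ x y) z = mul₂ x (mul₂ y z))
    (hanti₂ : ∀ x y : P₂, br₂ x y = - br₂ y x)
    (hjac₂ : ∀ x y z : P₂, br₂ (br₂ x y) z + br₂ (br₂ y z) x + br₂ (br₂ z x) y = 0)
    (M B : (P₁ ⊗[K] P₂) →ₗ[K] (P₁ ⊗[K] P₂) →ₗ[K] (P₁ ⊗[K] P₂))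
    (hM : ∀ (x₁ x₂ : P₁) (y₁ y₂ : P₂),
      M (x₁ ⊗ₜ[K] y₁) (x₂ ⊗ₜ[K] y₂) = (mul₁ x₁ x₂) ⊗ₜ[K] (mul₂ y₁ y₂))
    (hB : ∀ (x₁ x₂ : P₁) (y₁ y₂ : P₂),
      B (x₁ ⊗ₜ[K] y₁) (x₂ ⊗ₜ[K] y₂)
        = (br₁ x₁ x₂) ⊗ₜ[K] (mul₂ y₁ y₂) + (mul₁ x₁ x₂) ⊗ₜ[K] (br₂ y₁ y₂))
    (htleib₁ : ∀ x y z : P₁, mul₁ x (br₁ y z) = δ • (br₁ (mul₁ x y) z + br₁ y (mul₁ x z)))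
    (htleib₂ : ∀ x y z : P₂, mul₂ x (br₂ y z) = δ • (br₂ (mul₂ x y) z + br₂ y (mul₂ x z))) :
    (∀ u v : P₁ ⊗[K] P₂, M u v = M v u) ∧
    (∀ u v w : P₁ ⊗[K] P₂, M (M u v) w = M u (M v w)) ∧
    (∀ u v : P₁ ⊗[K] P₂, B u v = - B v u) ∧
    (∀ u v w : P₁ ⊗[K] P₂, B (B u v) w + B (B v w) u + B (B w u) v = 0) ∧
    (∀ u v w : P₁ ⊗[K] P₂, M u (B v w) = δ • (B (M u v) w + B v (M u w))) := by
  have hlc₁ : ∀ x y z : P₁, mul₁ x (mul₁ y z) = mul₁ y (mul₁ x z) := by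
    intro x y z; rw [← hassoc₁, hcomm₁ x y, hassoc₁]
  have hlc₂ : ∀ x y z : P₂, mul₂ x (mul₂ y z) = mul₂ y (mul₂ x z) := by
    intro x y z; rw [← hassoc₂, hcomm₂ x y, hassoc₂]
  have hN₁ : ∀ x y z : P₁, mul₁ x (br₁ y z) = δ • (br₁ (mul₁ x y) z - br₁ (mul₁ x z) y) := by
    intro x y z; rw [htleib₁, hanti₁ y (mul₁ x z)]; abel_nf
  have hNL₁ : ∀ x y z : P₁, mul₁ (br₁ y z) x = δ • (br₁ (mul₁ x y) z - br₁ (mul₁ x z) y) := by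
    intro x y z; rw [hcomm₁, hN₁]
  have hN₂ : ∀ x y z : P₂, mul₂ x (br₂ y z) = δ • (br₂ (mul₂ x y) z - br₂ (mul₂ x z) y) := by
    intro x y z; rw [htleib₂, hanti₂ y (mul₂ x z)]; abel_nf
  have hNL₂ : ∀ x y z : P₂, mul₂ (br₂ y z) x = δ • (br₂ (mul₂ x y) z - br₂ (mul₂ x z) y) := by
    intro x y z; rw [hcomm₂, hN₂]
  have hA₁ : ∀ x y z : P₁, br₁ x (mul₁ y z) = - br₁ (mul₁ y z) x := fun x y z => hanti₁ ..
  have hA₂ : ∀ x y z : P₂, br₂ x (mul₂ y z) = - br₂ (mul₂ y z) x := fun x y z => hanti₂ ..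
  -- pure-tensor Jacobi identity
  have pureJac : ∀ (a c e : P₁) (b d f : P₂),
      B (B (a ⊗ₜ[K] b) (c ⊗ₜ[K] d)) (e ⊗ₜ[K] f)
        + B (B (c ⊗ₜ[K] d) (e ⊗ₜ[K] f)) (a ⊗ₜ[K] b)
        + B (B (e ⊗ₜ[K] f) (a ⊗ₜ[K] b)) (c ⊗ₜ[K] d) = 0 := by
    intro a c e b d f
    have e1 : br₁ (br₁ a c) e = -(br₁ (br₁ c e) a + br₁ (br₁ e a) c) :=
      eq_neg_of_add_eq_zero_left (by rw [← add_assoc]; exact hjac₁ a c e)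
    have e2 : br₂ (br₂ b d) f = -(br₂ (br₂ d f) b + br₂ (br₂ f b) d) :=
      eq_neg_of_add_eq_zero_left (by rw [← add_assoc]; exact hjac₂ b d f)
    simp only [hB, map_add, LinearMap.add_apply, hN₁, hNL₁, hN₂, hNL₂,
      smul_sub, smul_add, sub_tmul, add_tmul, tmul_sub, tmul_add, ← smul_tmul', tmul_smul,
      hcomm₁, hassoc₁, hlc₁, hcomm₂, hassoc₂, hlc₂, hA₁, hA₂, neg_tmul, tmul_neg, neg_neg,
      smul_neg, neg_add_rev, neg_sub]
    rw [e1, e2]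
    simp only [neg_tmul, tmul_neg, neg_add, add_tmul, tmul_add]
    abel
  -- pure-tensor compatibility (transposed Leibniz) identity
  have pureLeib : ∀ (a c e : P₁) (b d f : P₂),
      M (a ⊗ₜ[K] b) (B (c ⊗ₜ[K] d) (e ⊗ₜ[K] f))
        = δ • (B (M (a ⊗ₜ[K] b) (c ⊗ₜ[K] d)) (e ⊗ₜ[K] f)
            + B (c ⊗ₜ[K] d) (M (a ⊗ₜ[K] b) (e ⊗ₜ[K] f))) := by
    intro a c e b d f
    simp only [hB, hM, map_add, LinearMap.add_apply, hN₁, hNL₁, hN₂, hNL₂,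
      smul_sub, smul_add, sub_tmul, add_tmul, tmul_sub, tmul_add, ← smul_tmul', tmul_smul,
      hcomm₁, hassoc₁, hlc₁, hcomm₂, hassoc₂, hlc₂, hA₁, hA₂, neg_tmul, tmul_neg, neg_neg,
      smul_neg, neg_add_rev, neg_sub]
    module
  refine ⟨?_, ?_, ?_, ?_, ?_⟩
  · -- commutativity
    intro u v
    induction u using TensorProduct.induction_on with
    | zero => simp
    | tmul x y =>
      induction v using TensorProduct.induction_on with
      | zero => simp
      | tmul x' y' => rw [hM, hM, hcomm₁, hcomm₂]
      | add p q hp hq => simp only [map_add, LinearMap.add_apply, hp, hq]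
    | add p q hp hq => simp only [map_add, LinearMap.add_apply, hp, hq]
  · -- associativity
    intro u v w
    induction u using TensorProduct.induction_on with
    | zero => simp
    | tmul x y =>
      induction v using TensorProduct.induction_on with
      | zero => simp
      | tmul x' y' =>
        induction w using TensorProduct.induction_on with
        | zero => simp
        | tmul x'' y'' => rw [hM, hM, hM, hM, hassoc₁, hassoc₂]
        | add p q hp hq => simp only [map_add, LinearMap.add_apply, hp, hq]
      | add p q hp hq => simp only [map_add, LinearMap.add_apply, hp, hq]
    | add p q hp hq => simp only [map_add, LinearMap.add_apply, hp, hq]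
  · -- antisymmetry
    intro u v
    induction u using TensorProduct.induction_on with
    | zero => simp
    | tmul x y =>
      induction v using TensorProduct.induction_on with
      | zero => simp
      | tmul x' y' =>
        rw [hB, hB, hanti₁ x' x, hcomm₁ x' x, hanti₂ y' y, hcomm₂ y' y]
        simp only [neg_tmul, tmul_neg, neg_add, neg_neg]
      | add p q hp hq =>
        simp only [map_add, LinearMap.add_apply, hp, hq]; abel
    | add p q hp hq =>
      simp only [map_add, LinearMap.add_apply, hp, hq]; abel
  · -- Jacobi identity
    intro u v w
    induction u using TensorProduct.induction_on with
    | zero => simp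
    | tmul x y =>
      induction v using TensorProduct.induction_on with
      | zero => simp
      | tmul x' y' =>
        induction w using TensorProduct.induction_on with
        | zero => simp
        | tmul x'' y'' => exact pureJac x x' x'' y y' y''
        | add p q hp hq =>
          simp only [map_add, LinearMap.add_apply]
          linear_combination (norm := module) hp + hq
      | add p q hp hq =>
        simp only [map_add, LinearMap.add_apply]
        linear_combination (norm := module) hp + hq
    | add p q hp hq =>
      simp only [map_add, LinearMap.add_apply]
      linear_combination (norm := module) hp + hq
  · -- transposed Leibniz rule
    intro u v w
    induction u using TensorProduct.induction_on with
    | zero => simp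
    | tmul x y =>
      induction v using TensorProduct.induction_on with
      | zero => simp
      | tmul x' y' =>
        induction w using TensorProduct.induction_on with
        | zero => simp
        | tmul x'' y'' => exact pureLeib x x' x'' y y' y''
        | add p q hp hq =>
          simp only [map_add, LinearMap.add_apply]
          linear_combination (norm := module) hp + hq
      | add p q hp hq =>
        simp only [map_add, LinearMap.add_apply]
        linear_combination (norm := module) hp + hq
    | add p q hp hq =>
      simp only [map_add, LinearMap.add_apply]
      linear_combination (norm := module) hp + hq
end

section
/- Every transposed δ-Poisson algebra with δ ≠ 1 satisfies the strong identity {h,x}·{y,z} + {h,y}·{z,x} + {h,z}·{x,y} = 0. -/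
theorem stmt12 {K : Type*} [Field K] [CharZero K] {P : Type*} [AddCommGroup P] [Module K P]
    (mul br : P →ₗ[K] P →ₗ[K] P) (δ : K)
    (hcomm : ∀ x y : P, mul x y = mul y x)
    (hassoc : ∀ x y z : P, mul (mul x y) z = mul x (mul y z))
    (hanti : ∀ x y : P, br x y = - br y x)
    (hjac : ∀ x y z : P, br (br x y) z + br (br y z) x + br (br z x) y = 0)
    (htleib : ∀ x y z : P, mul x (br y z) = δ • (br (mul x y) z + br y (mul x z)))
    (hδ : δ ≠ 1) :
    ∀ h x y z : P, mul (br h x) (br y z) + mul (br h y) (br z x) + mul (br h z) (br x y) = 0 := by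
  by_cases hδ0 : δ = 0
  · intro h x y z
    rw [htleib, htleib, htleib, hδ0]
    simp
  -- key lemma C
  have hC : ∀ w x y z : P, br (br x y) (mul w z) + br (br y z) (mul w x)
      + br (br z x) (mul w y) = 0 := by
    intro w x y z
    have h2 : (br (br (mul w x) y) z + br (br (mul w y) z) x + br (br (mul w z) x) y)
        + (br (br x (mul w y)) z + br (br y (mul w z)) x + br (br z (mul w x)) y)
        + (br (br x y) (mul w z) + br (br y z) (mul w x) + br (br z x) (mul w y)) = 0 := by
      linear_combination (norm := module) hjac (mul w x) y z + hjac (mul w y) z x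
        + hjac (mul w z) x y
    have e : mul w (br (br x y) z + br (br y z) x + br (br z x) y) = mul w 0 := by
      rw [hjac]
    have h1 : δ • (δ • ((br (br (mul w x) y) z + br (br (mul w y) z) x + br (br (mul w z) x) y)
        + (br (br x (mul w y)) z + br (br y (mul w z)) x + br (br z (mul w x)) y))
        + (br (br x y) (mul w z) + br (br y z) (mul w x) + br (br z x) (mul w y))) = 0 := by
      rw [map_add, map_add, map_zero] at e
      rw [htleib w (br x y) z, htleib w (br y z) x, htleib w (br z x) y,
        htleib w x y, htleib w y z, htleib w z x] at e
      simp only [map_smul, map_add, LinearMap.smul_apply, LinearMap.add_apply] at e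
      linear_combination (norm := module) e
    have h1' : δ • ((br (br (mul w x) y) z + br (br (mul w y) z) x + br (br (mul w z) x) y)
        + (br (br x (mul w y)) z + br (br y (mul w z)) x + br (br z (mul w x)) y))
        + (br (br x y) (mul w z) + br (br y z) (mul w x) + br (br z x) (mul w y)) = 0 := by
      rcases smul_eq_zero.mp h1 with h | h
      · exact absurd h hδ0
      · exact h
    have h3 : (1 - δ) • (br (br x y) (mul w z) + br (br y z) (mul w x)
        + br (br z x) (mul w y)) = 0 := by
      linear_combination (norm := module) h1' - δ • h2
    rcases smul_eq_zero.mp h3 with h | h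
    · exact absurd h (sub_ne_zero.mpr (Ne.symm hδ))
    · exact h
  -- expansion lemma
  have hexp : ∀ a b c d : P, mul (br a b) (br c d) = (δ * δ) •
      (br (br (mul c a) b) d + br (br a (mul c b)) d
       + br c (br (mul d a) b) + br c (br a (mul d b))) := by
    intro a b c d
    rw [htleib (br a b) c d, hcomm (br a b) c, hcomm (br a b) d,
      htleib c a b, htleib d a b]
    simp only [map_smul, map_add, LinearMap.smul_apply, LinearMap.add_apply]
    module
  intro h x y z
  rw [hexp h x y z, hexp h y z x, hexp h z x y]
  -- helper equalities
  have a1 : br z (br h (mul x y)) = - br (br h (mul y x)) z := by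
    rw [hcomm x y, ← hanti]
  have a2 : br x (br h (mul y z)) = - br (br h (mul z y)) x := by
    rw [hcomm y z, ← hanti]
  have a3 : br y (br h (mul z x)) = - br (br h (mul x z)) y := by
    rw [hcomm z x, ← hanti]
  have a4 : br y (br (mul z h) x) = br (br x (mul z h)) y := by
    rw [hanti y, hanti (mul z h) x]
    simp
  have a5 : br z (br (mul x h) y) = br (br y (mul x h)) z := by
    rw [hanti z, hanti (mul x h) y]
    simp
  have a6 : br x (br (mul y h) z) = br (br z (mul y h)) x := by
    rw [hanti x, hanti (mul y h) z]
    simp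
  have e1 : br (br x z) (mul y h) = br (br x z) (mul h y) := by rw [hcomm]
  have e2 : br (br y x) (mul z h) = br (br y x) (mul h z) := by rw [hcomm]
  have e3 : br (br z y) (mul x h) = br (br z y) (mul h x) := by rw [hcomm]
  have J1 := hjac (mul y h) x z
  have J2 := hjac (mul z h) y x
  have J3 := hjac (mul x h) z y
  have C1 := hC h y x z
  linear_combination (norm := module) (δ * δ) • (J1 + J2 + J3 + a1 + a2 + a3
    + a4 + a5 + a6 - e1 - e2 - e3 - C1)
end

section
/- Every transposed δ-Poisson algebra with δ ≠ 1 satisfies δ²({x·u, y·v} + {x·v, y·u}) = (1−δ)·u·v·{x,y}. -/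
theorem stmt13 {K : Type*} [Field K] [CharZero K] {P : Type*} [AddCommGroup P] [Module K P]
    (mul br : P →ₗ[K] P →ₗ[K] P) (δ : K)
    (hcomm : ∀ x y : P, mul x y = mul y x)
    (hassoc : ∀ x y z : P, mul (mul x y) z = mul x (mul y z))
    (hanti : ∀ x y : P, br x y = - br y x)
    (hjac : ∀ x y z : P, br (br x y) z + br (br y z) x + br (br z x) y = 0)
    (htleib : ∀ x y z : P, mul x (br y z) = δ • (br (mul x y) z + br y (mul x z)))
    (hδ : δ ≠ 1) :
    ∀ x y u v : P, (δ^2) • (br (mul x u) (mul y v) + br (mul x v) (mul y u)) = (1 - δ) • mul (mul u v) (br x y) := by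
  intro x y u v
  have e1 : mul (mul u v) (br x y)
      = δ • (br (mul (mul u v) x) y + br x (mul (mul u v) y)) := htleib _ _ _
  have e2 : mul u (mul v (br x y))
      = (δ * δ) • (br (mul (mul u v) x) y + br x (mul (mul u v) y)
        + br (mul v x) (mul u y) + br (mul u x) (mul v y)) := by
    rw [htleib v x y, map_smul, map_add, htleib u (mul v x) y, htleib u x (mul v y),
      ← hassoc u v x, ← hassoc u v y]
    module
  have key : mul u (mul v (br x y)) = mul (mul u v) (br x y) := (hassoc u v _).symm
  rw [e2, e1] at key
  rw [hcomm x u, hcomm y v, hcomm x v, hcomm y u, e1]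
  linear_combination (norm := module) key
end

section
/- If an algebra P is simultaneously a δ₁-Poisson algebra and a transposed δ₂-Poisson algebra with δ₁·δ₂ ≠ 1/3, then it satisfies {x,y}·z = 0 and {x·y, z} = 0 for all x, y, z (i.e. it is a mixed-Poisson algebra). -/
theorem stmt14 {K : Type*} [Field K] [CharZero K] {P : Type*} [AddCommGroup P] [Module K P]
    (mul br : P →ₗ[K] P →ₗ[K] P) (δ₁ δ₂ : K)
    (hcomm : ∀ x y : P, mul x y = mul y x)
    (hassoc : ∀ x y z : P, mul (mul x y) z = mul x (mul y z))
    (hanti : ∀ x y : P, br x y = - br y x)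
    (hjac : ∀ x y z : P, br (br x y) z + br (br y z) x + br (br z x) y = 0)
    (hleib : ∀ x y z : P, br (mul x y) z = δ₁ • (mul x (br y z) + mul (br x z) y))
    (htleib : ∀ x y z : P, mul x (br y z) = δ₂ • (br (mul x y) z + br y (mul x z)))
    (hδ : δ₁ * δ₂ ≠ 1/3) :
    ∀ x y z : P, mul (br x y) z = 0 ∧ br (mul x y) z = 0 := by
  have lem : ∀ x y z : P, br (mul x y) z =
      (δ₁ * δ₂) • (br (mul x y) z + br (mul x y) z - br (mul x z) y - br (mul y z) x) := by
    intro x y z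
    have h1 : mul x (br y z) = δ₂ • (br (mul x y) z - br (mul x z) y) := by
      rw [htleib x y z, hanti y (mul x z)]
      module
    have h2 : mul (br x z) y = δ₂ • (br (mul x y) z - br (mul y z) x) := by
      rw [hcomm (br x z) y, htleib y x z, hcomm y x, hanti x (mul y z)]
      module
    conv_lhs => rw [hleib x y z, h1, h2]
    module
  have hbr : ∀ x y z : P, br (mul x y) z = 0 := by
    intro x y z
    have hE1 := lem x y z
    rw [hcomm x z] at hE1
    have hE2 := lem y z x
    rw [hcomm y x] at hE2
    have hE3 := lem z x y
    rw [hcomm z y] at hE3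
    set A := br (mul x y) z with hA
    set B := br (mul y z) x with hB
    set C := br (mul z x) y with hC
    have hS : A + B + C = 0 := by
      calc A + B + C
          = (δ₁ * δ₂) • (A + A - C - B) + (δ₁ * δ₂) • (B + B - A - C)
            + (δ₁ * δ₂) • (C + C - B - A) := by rw [← hE1, ← hE2, ← hE3]
        _ = 0 := by module
    have key : (1 - 3 * (δ₁ * δ₂)) • A = 0 := by
      calc (1 - 3 * (δ₁ * δ₂)) • A
          = A - (δ₁ * δ₂) • (A + A - C - B) - (δ₁ * δ₂) • (A + B + C) := by module
        _ = A - A - (δ₁ * δ₂) • (0 : P) := by rw [← hE1, hS]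
        _ = 0 := by simp
    rcases smul_eq_zero.mp key with h | h
    · exfalso
      apply hδ
      field_simp
      linear_combination -h
    · exact h
  intro x y z
  refine ⟨?_, hbr x y z⟩
  rw [hcomm (br x y) z, htleib z x y, hbr, hanti x (mul z y), hbr]
  simp
end

section
/- Let (A, ·) be a (not necessarily associative) algebra satisfying the identity 3δ(xy)z + (1−2δ)y(zx) − (2δ+1)x(yz) − x(zy) + y(xz) + δz(xy) = 0 with δ ≠ 0. Then the commutative product x∘y = ½(xy + yx) is associative, the bracket [x,y] = ½(xy − yx) satisfies the Jacobi identity, and together they satisfy [x∘y, z] = δ(x∘[y,z] + [x,z]∘y); conversely if (A, ∘, [,]) is a δ-Poisson algebra then (A, ·) satisfies the identity above. -/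
noncomputable def circ {K : Type*} [Field K] {P : Type*} [AddCommGroup P] [Module K P]
    (mul : P →ₗ[K] P →ₗ[K] P) (x y : P) : P := (2 : K)⁻¹ • (mul x y + mul y x)

noncomputable def lb {K : Type*} [Field K] {P : Type*} [AddCommGroup P] [Module K P]
    (mul : P →ₗ[K] P →ₗ[K] P) (x y : P) : P := (2 : K)⁻¹ • (mul x y - mul y x)

theorem stmt16 {K : Type*} [Field K] [CharZero K] {P : Type*} [AddCommGroup P] [Module K P]
    (mul : P →ₗ[K] P →ₗ[K] P) (δ : K) (hδ : δ ≠ 0) :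
    (∀ x y z : P, (3 * δ) • mul (mul x y) z + (1 - 2 * δ) • mul y (mul z x) - (2 * δ + 1) • mul x (mul y z) - mul x (mul z y) + mul y (mul x z) + δ • mul z (mul x y) = 0) ↔
    ((∀ x y z : P, circ mul (circ mul x y) z = circ mul x (circ mul y z)) ∧
     (∀ x y z : P, lb mul (lb mul x y) z + lb mul (lb mul y z) x + lb mul (lb mul z x) y = 0) ∧
     (∀ x y z : P, lb mul (circ mul x y) z = δ • (circ mul x (lb mul y z) + circ mul (lb mul x z) y))) := by
  have h12 : (12 * δ : K) ≠ 0 := by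
    simp [hδ]
  constructor
  · intro h
    refine ⟨fun x y z => ?_, fun x y z => ?_, fun x y z => ?_⟩
    · apply smul_right_injective P h12
      simp only [circ, lb, map_add, map_smul, map_sub, LinearMap.add_apply,
        LinearMap.smul_apply, LinearMap.sub_apply]
      linear_combination (norm := module) h x y z + h y x z - h y z x - h z y x
    · have key : (12 * δ : K) • (lb mul (lb mul x y) z + lb mul (lb mul y z) x + lb mul (lb mul z x) y) = 0 := by
        simp only [circ, lb, map_add, map_smul, map_sub, LinearMap.add_apply,
          LinearMap.smul_apply, LinearMap.sub_apply]
        linear_combination (norm := module) h x y z - h x z y - h y x z + h y z x + h z x y - h z y x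
      exact (smul_eq_zero.mp key).resolve_left h12
    · apply smul_right_injective P h12
      simp only [circ, lb, map_add, map_smul, map_sub, LinearMap.add_apply,
        LinearMap.smul_apply, LinearMap.sub_apply]
      linear_combination (norm := module) h x y z - δ • h x z y + h y x z - δ • h y z x
        + δ • h z x y + δ • h z y x
  · rintro ⟨hA, hJ, hL⟩ x y z
    have a1 := hA x y z
    have a2 := hA x z y
    have j1 := hJ x y z
    have l1 := hL x y z
    have l2 := hL x z y
    have l3 := hL y z x
    simp only [circ, lb, map_add, map_smul, map_sub, LinearMap.add_apply,
      LinearMap.smul_apply, LinearMap.sub_apply, smul_add, smul_sub] at a1 a2 j1 l1 l2 l3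
    linear_combination (norm := module) (4 * δ) • a1 + (2 * (1 - δ)) • a2 + (2 * δ) • j1
      + (2 * δ) • l1 + (2 * (δ - 1)) • l2 + (2 * (δ + 1)) • l3
end

section
/- If an algebra (A, ·) satisfies the identity 3δ(xy)z + (1−2δ)y(zx) − (2δ+1)x(yz) − x(zy) + y(xz) + δz(xy) = 0 with δ ≠ 0 and is commutative, then it is associative. -/
theorem stmt17 {K : Type*} [Field K] [CharZero K] {P : Type*} [AddCommGroup P] [Module K P]
    (mul : P →ₗ[K] P →ₗ[K] P) (δ : K) (hδ : δ ≠ 0)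
    (hid : ∀ x y z : P, (3 * δ) • mul (mul x y) z + (1 - 2 * δ) • mul y (mul z x) - (2 * δ + 1) • mul x (mul y z) - mul x (mul z y) + mul y (mul x z) + δ • mul z (mul x y) = 0)
    (hcomm : ∀ x y : P, mul x y = mul y x) :
    ∀ x y z : P, mul (mul x y) z = mul x (mul y z) := by
  have e : ∀ x y z : P, (4 * δ) • mul (mul x y) z + (2 - 2 * δ) • mul y (mul x z)
      - (2 * δ + 2) • mul x (mul y z) = 0 := by
    intro x y z
    have h := hid x y z
    rw [hcomm z x, hcomm z y, hcomm z (mul x y)] at h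
    linear_combination (norm := module) h
  intro x y z
  have e1 := e x y z
  have e2 := e y x z
  rw [hcomm y x] at e2
  have d : (4 : K) • (mul y (mul x z) - mul x (mul y z)) = 0 := by
    linear_combination (norm := module) e1 - e2
  have d' : mul y (mul x z) = mul x (mul y z) := by
    have h4 : (4 : K) ≠ 0 := by norm_num
    rcases smul_eq_zero.mp d with h | h
    · exact absurd h h4
    · exact sub_eq_zero.mp h
  have f : (4 * δ) • (mul (mul x y) z - mul x (mul y z)) = 0 := by
    rw [d'] at e1
    linear_combination (norm := module) e1
  rcases smul_eq_zero.mp f with h | h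
  · exact absurd h (by simpa using hδ)
  · exact sub_eq_zero.mp h
end

section
/- For a bilinear product · on a vector space A, the polarized structure (A, ∘, [·,·]) with x∘y = ½(xy+yx) and [x,y] = ½(xy−yx) satisfies [x∘y, z] = 0 and x∘[y,z] = 0 for all x, y, z if and only if (A, ·) satisfies the identity (x·z)·y = y·(z·x) for all x, y, z. -/
theorem stmt19 {K : Type*} [Field K] [CharZero K] {P : Type*} [AddCommGroup P] [Module K P]
    (mul : P →ₗ[K] P →ₗ[K] P) :
    ((∀ x y z : P, lb mul (circ mul x y) z = 0) ∧ (∀ x y z : P, circ mul x (lb mul y z) = 0)) ↔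
    (∀ x y z : P, mul (mul x z) y = mul y (mul z x)) := by
  have h2 : ((2 : K)⁻¹ : K) ≠ 0 := inv_ne_zero two_ne_zero
  constructor
  · rintro ⟨hA, hB⟩ x y z
    have hA' := hA x z y
    have hB' := hB y x z
    simp only [circ, lb, map_add, map_sub, map_smul, LinearMap.add_apply,
      LinearMap.sub_apply, LinearMap.smul_apply, smul_eq_zero, h2, false_or] at hA' hB'
    have key : (2 : K) • (mul (mul x z) y) = (2 : K) • (mul y (mul z x)) := by
      have := congrArg₂ (· + ·) hA' hB'
      simp only [add_zero] at this
      linear_combination (norm := module) (2 : K) • this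
    exact smul_right_injective P (two_ne_zero) key
  · intro h
    constructor <;> intro x y z <;>
      simp only [circ, lb, map_add, map_sub, map_smul, LinearMap.add_apply,
        LinearMap.sub_apply, LinearMap.smul_apply, smul_eq_zero, h2, false_or,
        smul_add, smul_sub]
    · rw [← h y z x, ← h x z y]; abel
    · rw [h y x z, h z x y]; abel
end
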